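/- arXiv:1905.07845 — 4 statements merged into one kernel-verified Lean document; each statement's English description precedes it below -/
import Mathlib

section
/- Let ℓ₁, …, ℓ_n be real numbers, not all equal, δ > 0, and suppose β* < -max_i ℓ_i satisfies Ψ(β*) = 0, where Ψ is as defined previously. Set ω*_i = (ℓ_i + β*)^{-1} / ∑_{k=1}^n (ℓ_k + β*)^{-1}. Then ω* maximizes ∑_{i=1}^n ω_i ℓ_i over all probability vectors ω with -(1/n) ∑_{i=1}^n log(n ω_i) ≤ δ. -/
/-!
Write `a i = -(ℓ i + β) > 0`. The weights `ω*` satisfy `ω* i * a i = c` for a constant `c > 0`,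
which is the KKT condition for minimizing `∑ ω i * a i` over `{ω > 0 | ∑ log ω i ≥ ∑ log ω* i}`:
by `log t ≤ t - 1`, any such `ω` has `∑ ω i / ω* i ≥ n`, i.e. `∑ ω i * a i ≥ n c = ∑ ω* i * a i`.
On the simplex this is the claim, because `Ψ(β) = δ - KL(u ‖ ω*)` with `u` uniform, so a root
of `Ψ` puts `ω*` on the boundary of the KL ball.
-/

open Finset Real

variable {ι : Type*} {s : Finset ι}

theorem card_le_sum_div_of_sum_log_le {x y : ι → ℝ} (hx : ∀ i ∈ s, 0 < x i)
    (hy : ∀ i ∈ s, 0 < y i) (hlog : ∑ i ∈ s, log (y i) ≤ ∑ i ∈ s, log (x i)) :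
    (#s : ℝ) ≤ ∑ i ∈ s, x i / y i := by
  have hterm : ∀ i ∈ s, log (x i) - log (y i) + 1 ≤ x i / y i := fun i hi => by
    have := log_le_sub_one_of_pos (div_pos (hx i hi) (hy i hi))
    rw [log_div (hx i hi).ne' (hy i hi).ne'] at this
    linarith
  calc (#s : ℝ) ≤ ∑ i ∈ s, (log (x i) - log (y i) + 1) := by
        rw [sum_add_distrib, sum_sub_distrib, sum_const, nsmul_one]
        linarith
    _ ≤ ∑ i ∈ s, x i / y i := sum_le_sum hterm

theorem sum_mul_le_sum_mul_of_sum_log_le {x y a : ι → ℝ} {c : ℝ} (hc : 0 ≤ c)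
    (hx : ∀ i ∈ s, 0 < x i) (hy : ∀ i ∈ s, 0 < y i) (hya : ∀ i ∈ s, y i * a i = c)
    (hlog : ∑ i ∈ s, log (y i) ≤ ∑ i ∈ s, log (x i)) :
    ∑ i ∈ s, y i * a i ≤ ∑ i ∈ s, x i * a i := by
  have hxa : ∀ i ∈ s, x i * a i = c * (x i / y i) := fun i hi => by
    rw [← hya i hi]
    field_simp [(hy i hi).ne']
  rw [sum_congr rfl hya, sum_congr rfl hxa, sum_const, nsmul_eq_mul, ← mul_sum, mul_comm]
  exact mul_le_mul_of_nonneg_left (card_le_sum_div_of_sum_log_le hx hy hlog) hc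

theorem sum_div_sum_mul_inv_le_of_sum_log_le {x p : ι → ℝ} (hx : ∀ i ∈ s, 0 < x i)
    (hp : ∀ i ∈ s, 0 < p i)
    (hlog : ∑ i ∈ s, log (p i / ∑ j ∈ s, p j) ≤ ∑ i ∈ s, log (x i)) :
    ∑ i ∈ s, p i / (∑ j ∈ s, p j) * (p i)⁻¹ ≤ ∑ i ∈ s, x i * (p i)⁻¹ := by
  have hP : ∀ i ∈ s, 0 < ∑ j ∈ s, p j := fun i hi =>
    (hp i hi).trans_le (single_le_sum (fun j hj => (hp j hj).le) hi)
  refine sum_mul_le_sum_mul_of_sum_log_le (inv_nonneg.2 (sum_nonneg fun j hj => (hp j hj).le))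
    hx (fun i hi => div_pos (hp i hi) (hP i hi)) (fun i hi => ?_) hlog
  rw [div_mul_eq_mul_div, mul_inv_cancel₀ (hp i hi).ne', one_div]

theorem sum_log_mul_eq {x : ι → ℝ} {t : ℝ} (ht : t ≠ 0) (hx : ∀ i ∈ s, x i ≠ 0) :
    ∑ i ∈ s, log (t * x i) = #s * log t + ∑ i ∈ s, log (x i) := by
  rw [sum_congr rfl fun i hi => log_mul ht (hx i hi), sum_add_distrib, sum_const, nsmul_eq_mul]

theorem inv_card_mul_sum_log_card_mul_div_sum {p : ι → ℝ} (hs : s.Nonempty)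
    (hp : ∀ i ∈ s, 0 < p i) :
    (1 / #s : ℝ) * ∑ i ∈ s, log (#s * (p i / ∑ j ∈ s, p j)) =
      (1 / #s : ℝ) * ∑ i ∈ s, log (p i) - log ((1 / #s : ℝ) * ∑ j ∈ s, p j) := by
  have hcard : (#s : ℝ) ≠ 0 := by exact_mod_cast hs.card_pos.ne'
  have hmean : 0 < (1 / #s : ℝ) * ∑ j ∈ s, p j :=
    mul_pos (by positivity) (sum_pos hp hs)
  have hterm : ∀ i ∈ s, log (#s * (p i / ∑ j ∈ s, p j)) =
      log (p i) - log ((1 / #s : ℝ) * ∑ j ∈ s, p j) := fun i hi => by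
    rw [← log_div (hp i hi).ne' hmean.ne']
    congr 1
    field_simp
  rw [sum_congr rfl hterm, sum_sub_distrib, sum_const, nsmul_eq_mul]
  field_simp

theorem stmt_6_general (n : ℕ) (hn : 0 < n) (ℓ : Fin n → ℝ)
    (δ : ℝ)
    (β : ℝ) (hβ : ∀ i, β < -ℓ i)
    (hroot : (1 / (n : ℝ)) * ∑ i, Real.log (-1 / (ℓ i + β)) -
        Real.log ((1 / (n : ℝ)) * ∑ i, -1 / (ℓ i + β)) + δ = 0)
    (ωstar : Fin n → ℝ)
    (hωstar : ∀ i, ωstar i = (ℓ i + β)⁻¹ / ∑ k, (ℓ k + β)⁻¹) :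
    ∀ ω : Fin n → ℝ, (∀ i, 0 < ω i) → ∑ i, ω i = 1 →
      -(1 / (n : ℝ)) * ∑ i, Real.log ((n : ℝ) * ω i) ≤ δ →
      ∑ i, ω i * ℓ i ≤ ∑ i, ωstar i * ℓ i := by
  intro ω hω hω_sum hω_kl
  have hn' : (0 : ℝ) < n := by exact_mod_cast hn
  set p : Fin n → ℝ := fun i => -1 / (ℓ i + β)
  have hp : ∀ i, 0 < p i := fun i => div_pos_of_neg_of_neg (by norm_num) (by linarith [hβ i])
  have hP : 0 < ∑ j, p j := sum_pos (fun i _ => hp i) ⟨⟨0, hn⟩, mem_univ _⟩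
  have hωstar_eq : ∀ i, ωstar i = p i / ∑ j, p j := fun i => by
    simp only [hωstar, p, neg_div, one_div, sum_neg_distrib, div_neg, neg_neg]
  have hωstar_sum : ∑ i, ωstar i = 1 := by
    rw [sum_congr rfl fun i _ => hωstar_eq i, ← sum_div, div_self hP.ne']
  have hωstar_kl : (1 / (n : ℝ)) * ∑ i, log (n * ωstar i) = -δ := by
    have := inv_card_mul_sum_log_card_mul_div_sum (s := univ) ⟨⟨0, hn⟩, mem_univ _⟩
      fun i _ => hp i
    simp only [card_univ, Fintype.card_fin, ← hωstar_eq] at this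
    linarith [hroot]
  have hlog : ∑ i, log (ωstar i) ≤ ∑ i, log (ω i) := by
    have h : ∑ i, log (n * ωstar i) ≤ ∑ i, log (n * ω i) :=
      le_of_mul_le_mul_left (by linarith) (one_div_pos.2 hn')
    rwa [sum_log_mul_eq hn'.ne' fun i _ => (hωstar_eq i ▸ div_pos (hp i) hP).ne',
      sum_log_mul_eq hn'.ne' fun i _ => (hω i).ne', add_le_add_iff_left] at h
  have key := sum_div_sum_mul_inv_le_of_sum_log_le (fun i _ => hω i) (fun i _ => hp i)
    (by simpa only [hωstar_eq] using hlog)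
  have hp_inv : ∀ i, (p i)⁻¹ = -(ℓ i + β) := fun i => by
    simp only [p, neg_div, inv_neg, one_div, inv_inv]
  simp only [← hωstar_eq, hp_inv, mul_neg, mul_add, sum_neg_distrib, sum_add_distrib,
    ← sum_mul] at key
  rw [hω_sum, hωstar_sum] at key
  linarith

/-- If `β*` in the domain is a root of `Ψ`, then the weights
`ω* i = (ℓ i + β*)⁻¹ / ∑ (ℓ k + β*)⁻¹` maximize `∑ ω i * ℓ i` over all
probability vectors in the KL ball of radius `δ`. -/
theorem stmt_6 (n : ℕ) (hn : 0 < n) (ℓ : Fin n → ℝ)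
    (hne : ¬ ∀ i j, ℓ i = ℓ j) (δ : ℝ) (hδ : 0 < δ)
    (β : ℝ) (hβ : ∀ i, β < -ℓ i)
    (hroot : (1 / (n : ℝ)) * ∑ i, Real.log (-1 / (ℓ i + β)) -
        Real.log ((1 / (n : ℝ)) * ∑ i, -1 / (ℓ i + β)) + δ = 0)
    (ωstar : Fin n → ℝ)
    (hωstar : ∀ i, ωstar i = (ℓ i + β)⁻¹ / ∑ k, (ℓ k + β)⁻¹) :
    ∀ ω : Fin n → ℝ, (∀ i, 0 < ω i) → ∑ i, ω i = 1 →
      -(1 / (n : ℝ)) * ∑ i, Real.log ((n : ℝ) * ω i) ≤ δ →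
      ∑ i, ω i * ℓ i ≤ ∑ i, ωstar i * ℓ i :=
  stmt_6_general n hn ℓ δ β hβ hroot ωstar hωstar
end

section
/- Let s₁, …, s_n be real numbers (the margins Y_i·F(X_i)), set ℓ_i = -exp(s_i), and take δ = log((1/n) ∑_{i=1}^n e^{-s_i}) - (1/n) ∑_{i=1}^n s_i. Then δ ≥ 0, and (assuming the s_i are not all equal so δ > 0) β* = 0 satisfies Ψ(0) = 0 with Ψ as defined before; consequently the worst-case weights are ω*_i = e^{-s_i} / ∑_{k=1}^n e^{-s_k}, which are exactly the AdaBoost reweighting weights. -/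
open Finset Real

/-! At `β = 0` one has `-1 / ℓ i = exp (-s i)`, so the first two terms of `Ψ 0` are exactly `-δ`
and the weights `ℓ i⁻¹ / ∑ ℓ k⁻¹` are the AdaBoost weights. Nonnegativity of `δ` is Jensen's
inequality for `exp` with uniform weights, strict as soon as the margins are not all equal. -/

section UniformJensen

variable {ι : Type*} [Fintype ι] (x : ι → ℝ)

theorem avg_le_log_avg_exp :
    (1 / (Fintype.card ι : ℝ)) * ∑ i, x i ≤
      log ((1 / (Fintype.card ι : ℝ)) * ∑ i, exp (x i)) := by
  cases isEmpty_or_nonempty ι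
  · simp
  have hw : ∑ _i : ι, 1 / (Fintype.card ι : ℝ) = 1 := by simp
  rw [le_log_iff_exp_le (by positivity)]
  simpa [mul_sum] using convexOn_exp.map_sum_le (t := univ) (p := x)
    (fun _ _ => by positivity) hw (fun _ _ => trivial)

theorem avg_lt_log_avg_exp (h : ∃ i j, x i ≠ x j) :
    (1 / (Fintype.card ι : ℝ)) * ∑ i, x i <
      log ((1 / (Fintype.card ι : ℝ)) * ∑ i, exp (x i)) := by
  obtain ⟨i, j, hij⟩ := h
  have : Nonempty ι := ⟨i⟩
  have hw : ∑ _i : ι, 1 / (Fintype.card ι : ℝ) = 1 := by simp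
  rw [lt_log_iff_exp_lt (by positivity)]
  simpa [mul_sum] using strictConvexOn_exp.map_sum_lt (t := univ) (p := x)
    (fun _ _ => by positivity) hw (fun _ _ => trivial) ⟨i, mem_univ i, j, mem_univ j, hij⟩

end UniformJensen

theorem stmt_7_general (n : ℕ) (s : Fin n → ℝ)
    (ℓ : Fin n → ℝ) (hℓ : ∀ i, ℓ i = -Real.exp (s i))
    (δ : ℝ)
    (hδ : δ = Real.log ((1 / (n : ℝ)) * ∑ i, Real.exp (-(s i))) -
        (1 / (n : ℝ)) * ∑ i, -(s i)) :
    0 ≤ δ ∧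
    ((¬ ∀ i j, s i = s j) → 0 < δ) ∧
    (1 / (n : ℝ)) * ∑ i, Real.log (-1 / (ℓ i + 0)) -
        Real.log ((1 / (n : ℝ)) * ∑ i, -1 / (ℓ i + 0)) + δ = 0 ∧
    (∀ i, (ℓ i + 0)⁻¹ / ∑ k, (ℓ k + 0)⁻¹ =
        Real.exp (-(s i)) / ∑ k, Real.exp (-(s k))) := by
  obtain rfl : ℓ = fun i => -exp (s i) := funext hℓ
  have hJensen := avg_le_log_avg_exp (fun i => -s i)
  simp only [Fintype.card_fin] at hJensen
  have hψ : ∀ i, -1 / (-exp (s i) + 0) = exp (-s i) := fun i => by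
    rw [add_zero, neg_div_neg_eq, one_div, exp_neg]
  have hinv : ∀ i, (-exp (s i) + 0)⁻¹ = -exp (-s i) := fun i => by
    rw [add_zero, inv_neg, exp_neg]
  refine ⟨by linarith, fun hne => ?_, ?_, fun i => ?_⟩
  · simp only [not_forall] at hne
    obtain ⟨i, j, hij⟩ := hne
    have := avg_lt_log_avg_exp (fun i => -s i) ⟨i, j, neg_injective.ne hij⟩
    simp only [Fintype.card_fin] at this
    linarith
  · simp only [hψ, log_exp]
    linarith
  · simp only [hinv, sum_neg_distrib, neg_div_neg_eq]

/-- Connection to AdaBoost: with margins `s i`, losses `ℓ i = -exp (s i)` and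
`δ = log((1/n) ∑ exp(-s i)) - (1/n) ∑ (-(s i))`, we have `δ ≥ 0` (Jensen), and
if the `s i` are not all equal then `δ > 0`; moreover `β* = 0` is a root of
`Ψ`, and the resulting worst-case weights are the AdaBoost weights
`exp(-s i) / ∑ exp(-s k)`. -/
theorem stmt_7 (n : ℕ) (hn : 0 < n) (s : Fin n → ℝ)
    (ℓ : Fin n → ℝ) (hℓ : ∀ i, ℓ i = -Real.exp (s i))
    (δ : ℝ)
    (hδ : δ = Real.log ((1 / (n : ℝ)) * ∑ i, Real.exp (-(s i))) -
        (1 / (n : ℝ)) * ∑ i, -(s i)) :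
    0 ≤ δ ∧
    ((¬ ∀ i j, s i = s j) → 0 < δ) ∧
    (1 / (n : ℝ)) * ∑ i, Real.log (-1 / (ℓ i + 0)) -
        Real.log ((1 / (n : ℝ)) * ∑ i, -1 / (ℓ i + 0)) + δ = 0 ∧
    (∀ i, (ℓ i + 0)⁻¹ / ∑ k, (ℓ k + 0)⁻¹ =
        Real.exp (-(s i)) / ∑ k, Real.exp (-(s k))) :=
  stmt_7_general n s ℓ hℓ δ hδ
end

section
/- Fix real numbers ℓ₁, …, ℓ_n, not all equal, and δ > 0. If there exists β* ∈ (-∞, -max_i ℓ_i) with Ψ(β*) = 0, then β* is the unique such root. -/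
/-!
Writing `y i = -1 / (ℓ i + β) > 0`, one has `y i' = y i ^ 2`, so
`Ψ' = mean y - mean (y ^ 2) / mean y = ((mean y) ^ 2 - mean (y ^ 2)) / mean y`.
If the `ℓ i` are not all equal, neither are the `y i`, and strict Jensen for `t ↦ t ^ 2` gives
`Ψ' < 0`. Hence `Ψ` is strictly decreasing on its (convex) domain and has at most one root.
-/

open Finset Real

theorem sq_mean_lt_mean_sq {ι : Type*} [Fintype ι] {y : ι → ℝ} (hy : ∃ i j, y i ≠ y j) :
    ((1 / (Fintype.card ι : ℝ)) * ∑ i, y i) ^ 2 < (1 / (Fintype.card ι : ℝ)) * ∑ i, y i ^ 2 := by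
  obtain ⟨i, j, hij⟩ := hy
  have hcard : (0 : ℝ) < Fintype.card ι := by
    have : Nonempty ι := ⟨i⟩
    exact_mod_cast Fintype.card_pos
  have h := (Even.strictConvexOn_pow even_two two_ne_zero).map_sum_lt (t := univ)
    (w := fun _ => 1 / (Fintype.card ι : ℝ)) (p := y) (fun _ _ => by positivity)
    (by simp [hcard.ne']) (fun _ _ => trivial) ⟨i, mem_univ _, j, mem_univ _, hij⟩
  simpa only [smul_eq_mul, ← mul_sum] using h

theorem hasDerivAt_neg_one_div_const_add (c : ℝ) {x : ℝ} (hx : c + x ≠ 0) :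
    HasDerivAt (fun x => -1 / (c + x)) ((-1 / (c + x)) ^ 2) x := by
  refine ((hasDerivAt_const x (-1 : ℝ)).fun_div ((hasDerivAt_id' x).const_add c) hx).congr_deriv
    ?_
  field_simp
  ring

section Psi

variable {ι : Type*} [Fintype ι] (ℓ : ι → ℝ) (δ : ℝ)

noncomputable def Ψ (β : ℝ) : ℝ :=
  (1 / (Fintype.card ι : ℝ)) * ∑ i, log (-1 / (ℓ i + β)) -
    log ((1 / (Fintype.card ι : ℝ)) * ∑ i, -1 / (ℓ i + β)) + δ

theorem mean_neg_one_div_add_pos [Nonempty ι] {β : ℝ} (hβ : ∀ i, ℓ i + β < 0) :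
    0 < (1 / (Fintype.card ι : ℝ)) * ∑ i, -1 / (ℓ i + β) := by
  have := Fintype.card_pos (α := ι)
  have : 0 < ∑ i, -1 / (ℓ i + β) :=
    sum_pos (fun i _ => div_pos_of_neg_of_neg (by norm_num) (hβ i)) univ_nonempty
  positivity

theorem hasDerivAt_Ψ [Nonempty ι] {β : ℝ} (hβ : ∀ i, ℓ i + β < 0) :
    HasDerivAt (Ψ ℓ δ)
      ((1 / (Fintype.card ι : ℝ)) * ∑ i, -1 / (ℓ i + β) -
        ((1 / (Fintype.card ι : ℝ)) * ∑ i, (-1 / (ℓ i + β)) ^ 2) /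
          ((1 / (Fintype.card ι : ℝ)) * ∑ i, -1 / (ℓ i + β))) β := by
  have hy : ∀ i, 0 < -1 / (ℓ i + β) := fun i => div_pos_of_neg_of_neg (by norm_num) (hβ i)
  have hterm : ∀ i, HasDerivAt (fun b => -1 / (ℓ i + b)) ((-1 / (ℓ i + β)) ^ 2) β :=
    fun i => hasDerivAt_neg_one_div_const_add (ℓ i) (hβ i).ne
  have hmean := (HasDerivAt.fun_sum (u := univ) fun i _ => hterm i).const_mul
    (1 / (Fintype.card ι : ℝ))
  have hlogs := (HasDerivAt.fun_sum (u := univ) fun i _ => (hterm i).log (hy i).ne').const_mul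
    (1 / (Fintype.card ι : ℝ))
  refine ((hlogs.sub (hmean.log (mean_neg_one_div_add_pos ℓ hβ).ne')).add_const δ).congr_deriv ?_
  congr 3 with i
  rw [sq, mul_div_cancel_right₀ _ (hy i).ne']

theorem strictAntiOn_Ψ (hℓ : ∃ i j, ℓ i ≠ ℓ j) :
    StrictAntiOn (Ψ ℓ δ) (⋂ i, Set.Iio (-ℓ i)) := by
  obtain ⟨i, j, hij⟩ := hℓ
  have : Nonempty ι := ⟨i⟩
  have hneg : ∀ β ∈ ⋂ i, Set.Iio (-ℓ i), ∀ k, ℓ k + β < 0 := fun β hβ k =>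
    lt_neg_iff_add_neg'.1 (Set.mem_iInter.1 hβ k)
  have hderiv := fun β hβ => hasDerivAt_Ψ ℓ δ (hneg β hβ)
  have hopen : IsOpen (⋂ i, Set.Iio (-ℓ i)) := isOpen_iInter_of_finite fun _ => isOpen_Iio
  refine strictAntiOn_of_deriv_neg (convex_iInter fun _ => convex_Iio _)
    (fun β hβ => (hderiv β hβ).continuousAt.continuousWithinAt) fun β hβ => ?_
  rw [hopen.interior_eq] at hβ
  have hy_ne : -1 / (ℓ i + β) ≠ -1 / (ℓ j + β) := by
    intro h
    apply hij
    simpa using congrArg (fun t => -t⁻¹) h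
  rw [(hderiv β hβ).deriv, sub_neg, lt_div_iff₀ (mean_neg_one_div_add_pos ℓ (hneg β hβ)), ← sq]
  exact sq_mean_lt_mean_sq (y := fun k => -1 / (ℓ k + β)) ⟨i, j, hy_ne⟩

end Psi

theorem stmt_16_general (n : ℕ) (ℓ : Fin n → ℝ)
    (hne : ¬ ∀ i j, ℓ i = ℓ j) (δ : ℝ)
    (β₁ β₂ : ℝ) (hβ₁ : ∀ i, β₁ < -ℓ i) (hβ₂ : ∀ i, β₂ < -ℓ i)
    (hroot₁ : (1 / (n : ℝ)) * ∑ i, Real.log (-1 / (ℓ i + β₁)) -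
        Real.log ((1 / (n : ℝ)) * ∑ i, -1 / (ℓ i + β₁)) + δ = 0)
    (hroot₂ : (1 / (n : ℝ)) * ∑ i, Real.log (-1 / (ℓ i + β₂)) -
        Real.log ((1 / (n : ℝ)) * ∑ i, -1 / (ℓ i + β₂)) + δ = 0) :
    β₁ = β₂ := by
  refine (strictAntiOn_Ψ ℓ δ (by simpa using hne)).injOn
    (Set.mem_iInter.2 hβ₁) (Set.mem_iInter.2 hβ₂) ?_
  simp only [Ψ, Fintype.card_fin]
  rw [hroot₁, hroot₂]

/-- Uniqueness of the root of `Ψ` on `(-∞, -max ℓ i)`: if the losses are not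
all equal and `δ > 0`, then any two roots of `Ψ` in the domain coincide. -/
theorem stmt_16 (n : ℕ) (hn : 0 < n) (ℓ : Fin n → ℝ)
    (hne : ¬ ∀ i j, ℓ i = ℓ j) (δ : ℝ) (hδ : 0 < δ)
    (β₁ β₂ : ℝ) (hβ₁ : ∀ i, β₁ < -ℓ i) (hβ₂ : ∀ i, β₂ < -ℓ i)
    (hroot₁ : (1 / (n : ℝ)) * ∑ i, Real.log (-1 / (ℓ i + β₁)) -
        Real.log ((1 / (n : ℝ)) * ∑ i, -1 / (ℓ i + β₁)) + δ = 0)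
    (hroot₂ : (1 / (n : ℝ)) * ∑ i, Real.log (-1 / (ℓ i + β₂)) -
        Real.log ((1 / (n : ℝ)) * ∑ i, -1 / (ℓ i + β₂)) + δ = 0) :
    β₁ = β₂ :=
  stmt_16_general n ℓ hne δ β₁ β₂ hβ₁ hβ₂ hroot₁ hroot₂
end

section
/- Let ω* be the exponential weights ω*_i = e^{-s_i}/∑_k e^{-s_k} for real numbers s₁, …, s_n, and let δ = log((1/n) ∑_k e^{-s_k}) + (1/n) ∑_i s_i. Then ω* maximizes ∑_{i=1}^n ω_i · (-e^{s_i}) over all probability vectors ω with -(1/n) ∑ log(n ω_i) ≤ δ. In particular, the worst-case expected exponential loss equals -n / ∑_{k=1}^n e^{-s_k}. -/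
/-- The AdaBoost weights `ω* i = exp(-s i) / ∑ exp(-s k)` maximize the expected
exponential loss `∑ ω i * (-(exp (s i)))` over the KL ball of radius
`δ = log((1/n) ∑ exp(-s k)) + (1/n) ∑ s i`, and the worst-case expected loss
equals `-n / ∑ exp(-s k)`. -/
theorem stmt_17 (n : ℕ) (hn : 0 < n) (s : Fin n → ℝ)
    (hne : ¬ ∀ i j, s i = s j)
    (δ : ℝ)
    (hδ : δ = Real.log ((1 / (n : ℝ)) * ∑ k, Real.exp (-(s k))) +
        (1 / (n : ℝ)) * ∑ i, s i)
    (ωstar : Fin n → ℝ)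
    (hωstar : ∀ i, ωstar i = Real.exp (-(s i)) / ∑ k, Real.exp (-(s k))) :
    (∀ ω : Fin n → ℝ, (∀ i, 0 < ω i) → ∑ i, ω i = 1 →
      -(1 / (n : ℝ)) * ∑ i, Real.log ((n : ℝ) * ω i) ≤ δ →
      ∑ i, ω i * (-Real.exp (s i)) ≤ ∑ i, ωstar i * (-Real.exp (s i))) ∧
    ∑ i, ωstar i * (-Real.exp (s i)) = -(n : ℝ) / ∑ k, Real.exp (-(s k)) := by
  have hnpos : (0:ℝ) < n := by exact_mod_cast hn
  have hnne : (n:ℝ) ≠ 0 := ne_of_gt hnpos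
  have hne' : Nonempty (Fin n) := Fin.pos_iff_nonempty.mp hn
  have hS : 0 < ∑ k, Real.exp (-(s k)) :=
    Finset.sum_pos (fun k _ => Real.exp_pos _) Finset.univ_nonempty
  set S := ∑ k, Real.exp (-(s k)) with hSdef
  have heq : ∑ i, ωstar i * (-Real.exp (s i)) = -(n:ℝ)/S := by
    have h1 : ∀ i : Fin n, ωstar i * (-Real.exp (s i)) = -(1/S) := by
      intro i
      rw [hωstar i, Real.exp_neg]
      field_simp
    rw [Finset.sum_congr rfl (fun i _ => h1 i)]
    simp [Finset.card_univ]
    ring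
  refine ⟨fun ω hpos hsum hKL => ?_, heq⟩
  rw [heq]
  -- rewrite the KL constraint
  have hlogS : Real.log ((1 / (n : ℝ)) * S) = Real.log S - Real.log n := by
    rw [Real.log_mul (by positivity) (ne_of_gt hS), one_div, Real.log_inv]
    ring
  have hKL' : -Real.log S ≤ (1/(n:ℝ)) * ∑ i, (Real.log (ω i) + s i) := by
    have hlog : ∀ i : Fin n, Real.log ((n:ℝ) * ω i) = Real.log n + Real.log (ω i) :=
      fun i => Real.log_mul hnne (ne_of_gt (hpos i))
    rw [Finset.sum_congr rfl (fun i _ => hlog i), Finset.sum_add_distrib,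
      Finset.sum_const, Finset.card_univ, Fintype.card_fin] at hKL
    rw [hδ, hlogS] at hKL
    simp only [nsmul_eq_mul] at hKL
    rw [Finset.sum_add_distrib]
    rw [show -(1/(n:ℝ)) * ((n:ℝ) * Real.log (n:ℝ) + ∑ x, Real.log (ω x))
        = -Real.log (n:ℝ) - (1/(n:ℝ)) * ∑ x, Real.log (ω x) from by field_simp; ring] at hKL
    rw [mul_add]
    linarith
  -- AM-GM
  have hAMGM : ∏ i, (ω i * Real.exp (s i)) ^ ((1:ℝ)/n) ≤
      ∑ i, (1/(n:ℝ)) * (ω i * Real.exp (s i)) := by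
    apply Real.geom_mean_le_arith_mean_weighted
    · intro i _; positivity
    · simp [Finset.card_univ]; field_simp
    · intro i _; exact le_of_lt (mul_pos (hpos i) (Real.exp_pos _))
  have hprod : ∏ i, (ω i * Real.exp (s i)) ^ ((1:ℝ)/n) =
      Real.exp ((1/(n:ℝ)) * ∑ i, (Real.log (ω i) + s i)) := by
    rw [Finset.mul_sum, Real.exp_sum]
    apply Finset.prod_congr rfl
    intro i _
    rw [Real.rpow_def_of_pos (mul_pos (hpos i) (Real.exp_pos _))]
    congr 1
    rw [Real.log_mul (ne_of_gt (hpos i)) (ne_of_gt (Real.exp_pos _)), Real.log_exp]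
    ring
  have hlb : (1:ℝ)/S ≤ ∑ i, (1/(n:ℝ)) * (ω i * Real.exp (s i)) := by
    calc (1:ℝ)/S = Real.exp (-Real.log S) := by
          rw [Real.exp_neg, Real.exp_log hS, one_div]
      _ ≤ Real.exp ((1/(n:ℝ)) * ∑ i, (Real.log (ω i) + s i)) := Real.exp_le_exp.mpr hKL'
      _ ≤ _ := by rw [← hprod]; exact hAMGM
  have hsum' : ∑ i, (1/(n:ℝ)) * (ω i * Real.exp (s i))
      = (1/(n:ℝ)) * ∑ i, ω i * Real.exp (s i) := by rw [Finset.mul_sum]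
  rw [hsum'] at hlb
  have : (n:ℝ)/S ≤ ∑ i, ω i * Real.exp (s i) := by
    have h2 := mul_le_mul_of_nonneg_left hlb hnpos.le
    rw [show (n:ℝ)*((1/(n:ℝ)) * ∑ i, ω i * Real.exp (s i)) = ∑ i, ω i * Real.exp (s i) by field_simp] at h2
    rwa [mul_one_div] at h2
  have hneg : ∑ i, ω i * (-Real.exp (s i)) = -∑ i, ω i * Real.exp (s i) := by
    simp [Finset.sum_neg_distrib]
  rw [hneg, neg_div]
  linarith
end
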